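/- Let M, N be complex 2×2 traceless matrices with M² = N² = I, written as M = X·σ and N = Y·σ in the Pauli basis with X = x̃ + iξ, Y = y + iη ∈ \mathbb{C}³. Suppose η ≠ 0 and M(N - N†) = 2I + N + N†. Then x̃ = (y × η)/|η|² and ξ = -η/|η|². -/

import Mathlib

/-!
By the product rule `(a·σ)(b·σ) = (a ⬝ b) I + i (a × b)·σ` and the linear independence of
`I, σ₁, σ₂, σ₃`, the hypothesis `M(N - N†) = 2I + N + N†`, i.e. `(X·σ)(2i η·σ) = 2I + 2 y·σ`,
is equivalent to `X ⬝ η = -i` and `X × η = -y`. The expansion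
`η × (X × η) = |η|² X - (X ⬝ η) η` then gives `|η|² X = y × η - i η`, whose real and imaginary
parts are the two claimed identities.
-/

open Matrix
noncomputable section

/-- The Pauli matrices `σ₁, σ₂, σ₃`. -/
def pauli : Fin 3 → Matrix (Fin 2) (Fin 2) ℂ :=
  ![!![0, 1; 1, 0], !![0, -Complex.I; Complex.I, 0], !![1, 0; 0, -1]]

/-- `X·σ = X₁σ₁ + X₂σ₂ + X₃σ₃` for a complex vector `X`. -/
def dotPauli (X : Fin 3 → ℂ) : Matrix (Fin 2) (Fin 2) ℂ := ∑ i, X i • pauli i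

open Complex

theorem Complex.ofReal_dotProduct {n : Type*} [Fintype n] (u v : n → ℝ) :
    ((u ⬝ᵥ v : ℝ) : ℂ) = ofReal ∘ u ⬝ᵥ ofReal ∘ v :=
  ofRealHom.map_dotProduct u v

theorem Complex.ofReal_comp_cross (u v : Fin 3 → ℝ) :
    ofReal ∘ (u ⨯₃ v) = (ofReal ∘ u) ⨯₃ (ofReal ∘ v) := by
  ext i
  fin_cases i <;> simp [cross_apply]

theorem dotProduct_self_smul_eq {R : Type*} [CommRing R] {x a b : Fin 3 → R} {c : R}
    (hdot : x ⬝ᵥ a = c) (hcross : x ⨯₃ a = -b) : (a ⬝ᵥ a) • x = c • a + b ⨯₃ a := by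
  have := cross_cross_eq_smul_sub_smul' a x a
  rw [hcross, hdot, map_neg, cross_anticomm] at this
  rw [this]
  abel

theorem eq_of_ofReal_add_I_mul_eq {n : Type*} {a b c d : n → ℝ}
    (h : ∀ i, (a i : ℂ) + I * b i = c i + I * d i) : a = c ∧ b = d := by
  constructor <;> ext i
  · simpa using congrArg re (h i)
  · simpa using congrArg im (h i)

theorem star_ofReal_add_I_smul {n : Type*} (u v : n → ℝ) :
    star (ofReal ∘ u + I • ofReal ∘ v) = ofReal ∘ u - I • ofReal ∘ v := by
  ext i
  simp [sub_eq_add_neg]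

theorem pauli_isHermitian (i : Fin 3) : (pauli i).IsHermitian := by
  fin_cases i <;> ext j k <;> fin_cases j <;> fin_cases k <;> simp [pauli]

theorem dotPauli_eq (a : Fin 3 → ℂ) :
    dotPauli a = !![a 2, a 0 - I * a 1; a 0 + I * a 1, -a 2] := by
  ext j k
  fin_cases j <;> fin_cases k <;>
  · simp only [dotPauli, pauli, Fin.sum_univ_three, Matrix.add_apply, Matrix.smul_apply, of_apply,
      cons_val', cons_val_zero, cons_val_one, cons_val, cons_val_fin_one, smul_eq_mul,
      Fin.zero_eta, Fin.mk_one]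
    ring

theorem dotPauli_add (a b : Fin 3 → ℂ) : dotPauli (a + b) = dotPauli a + dotPauli b := by
  simp only [dotPauli, Pi.add_apply, add_smul, Finset.sum_add_distrib]

theorem dotPauli_sub (a b : Fin 3 → ℂ) : dotPauli (a - b) = dotPauli a - dotPauli b := by
  simp only [dotPauli, Pi.sub_apply, sub_smul, Finset.sum_sub_distrib]

theorem dotPauli_smul (c : ℂ) (a : Fin 3 → ℂ) : dotPauli (c • a) = c • dotPauli a := by
  simp only [dotPauli, Pi.smul_apply, smul_eq_mul, mul_smul, Finset.smul_sum]

theorem conjTranspose_dotPauli (a : Fin 3 → ℂ) : (dotPauli a)ᴴ = dotPauli (star a) := by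
  simp only [dotPauli, conjTranspose_sum, conjTranspose_smul, (pauli_isHermitian _).eq,
    Pi.star_apply]

theorem dotPauli_mul_dotPauli (a b : Fin 3 → ℂ) :
    dotPauli a * dotPauli b = (a ⬝ᵥ b) • 1 + I • dotPauli (a ⨯₃ b) := by
  rw [dotPauli_eq, dotPauli_eq, dotPauli_eq, mul_fin_two, one_fin_two, smul_of, smul_of, of_add_of]
  simp only [Fin.isValue, mul_neg, neg_mul, neg_neg, vec3_dotProduct, smul_cons, smul_eq_mul,
    mul_one, mul_zero, smul_empty, cross_apply, cons_val, cons_val_zero, cons_val_one, neg_sub,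
    add_cons, head_cons, tail_cons, zero_add, empty_add_empty, EmbeddingLike.apply_eq_iff_eq,
    vecCons_inj, and_true]
  refine ⟨⟨?_, ?_⟩, ?_, ?_⟩
  · linear_combination -(a 1 * b 1) * I_sq
  · linear_combination (a 2 * b 0 - a 0 * b 2) * I_sq
  · linear_combination (a 0 * b 2 - a 2 * b 0) * I_sq
  · linear_combination -(a 1 * b 1) * I_sq

theorem eq_of_smul_one_add_dotPauli_eq {c d : ℂ} {a b : Fin 3 → ℂ}
    (h : c • 1 + dotPauli a = d • 1 + dotPauli b) : c = d ∧ a = b := by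
  simp only [dotPauli_eq, one_fin_two, smul_of, of_add_of, ← Matrix.ext_iff] at h
  have e00 := h 0 0
  have e01 := h 0 1
  have e10 := h 1 0
  have e11 := h 1 1
  simp only [smul_cons, smul_eq_mul, mul_one, mul_zero, smul_empty, add_cons, head_cons,
    tail_cons, zero_add, empty_add_empty, of_apply, cons_val', cons_val_zero, cons_val_fin_one,
    cons_val_one] at e00 e01 e10 e11
  refine ⟨by linear_combination (e00 + e11) / 2, ?_⟩
  ext i
  fin_cases i <;> simp only [Fin.zero_eta, Fin.mk_one, Fin.reduceFinMk]
  · linear_combination (e01 + e10) / 2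
  · linear_combination -I / 2 * (e10 - e01) + (a 1 - b 1) * I_sq
  · linear_combination (e00 - e11) / 2

theorem dotPauli_sub_conjTranspose (u v : Fin 3 → ℝ) :
    dotPauli (ofReal ∘ u + I • ofReal ∘ v) - (dotPauli (ofReal ∘ u + I • ofReal ∘ v))ᴴ =
      (2 * I) • dotPauli (ofReal ∘ v) := by
  rw [conjTranspose_dotPauli, star_ofReal_add_I_smul, ← dotPauli_sub, ← dotPauli_smul]
  congr 1
  module

theorem dotPauli_add_conjTranspose (u v : Fin 3 → ℝ) :
    dotPauli (ofReal ∘ u + I • ofReal ∘ v) + (dotPauli (ofReal ∘ u + I • ofReal ∘ v))ᴴ =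
      (2 : ℂ) • dotPauli (ofReal ∘ u) := by
  rw [conjTranspose_dotPauli, star_ofReal_add_I_smul, ← dotPauli_add, ← dotPauli_smul]
  congr 1
  module

theorem dotProduct_eq_and_cross_eq_of_dotPauli_mul {x a b : Fin 3 → ℂ}
    (h : dotPauli x * ((2 * I) • dotPauli a) = (2 : ℂ) • 1 + (2 : ℂ) • dotPauli b) :
    x ⬝ᵥ a = -I ∧ x ⨯₃ a = -b := by
  rw [mul_smul_comm, dotPauli_mul_dotPauli, smul_add, smul_smul, smul_smul, ← dotPauli_smul,
    ← dotPauli_smul] at h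
  obtain ⟨hdot, hcross⟩ := eq_of_smul_one_add_dotPauli_eq h
  constructor
  · linear_combination -I / 2 * hdot + (x ⬝ᵥ a) * I_sq
  · ext i
    have := congrFun hcross i
    simp only [Pi.smul_apply, smul_eq_mul, Pi.neg_apply] at this ⊢
    linear_combination -this / 2 + (x ⨯₃ a) i * I_sq

theorem stmt11_general (xt ξ y η : Fin 3 → ℝ)
    (M N : Matrix (Fin 2) (Fin 2) ℂ)
    (hM : M = dotPauli (fun i => (xt i : ℂ) + Complex.I * (ξ i : ℂ)))
    (hN : N = dotPauli (fun i => (y i : ℂ) + Complex.I * (η i : ℂ)))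
    (hη : η ≠ 0)
    (key : M * (N - Nᴴ) = (2 : ℂ) • (1 : Matrix (Fin 2) (Fin 2) ℂ) + N + Nᴴ) :
    xt = (η ⬝ᵥ η)⁻¹ • (crossProduct y η) ∧ ξ = -(η ⬝ᵥ η)⁻¹ • η := by
  change M = dotPauli (ofReal ∘ xt + I • ofReal ∘ ξ) at hM
  change N = dotPauli (ofReal ∘ y + I • ofReal ∘ η) at hN
  rw [add_assoc, hN, dotPauli_sub_conjTranspose, dotPauli_add_conjTranspose, hM] at key
  obtain ⟨hdot, hcross⟩ := dotProduct_eq_and_cross_eq_of_dotPauli_mul key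
  have h := dotProduct_self_smul_eq hdot hcross
  rw [← ofReal_dotProduct, ← ofReal_comp_cross] at h
  obtain ⟨hx, hξ⟩ := eq_of_ofReal_add_I_mul_eq (a := (η ⬝ᵥ η) • xt) (b := (η ⬝ᵥ η) • ξ)
    (c := y ⨯₃ η) (d := -η) fun i => by
      have := congrFun h i
      simp only [Pi.smul_apply, Pi.add_apply, Function.comp_apply, smul_eq_mul, neg_smul,
        Pi.neg_apply, ofReal_mul, ofReal_neg, mul_neg] at this ⊢
      linear_combination this
  have hηη : η ⬝ᵥ η ≠ 0 := mt dotProduct_self_eq_zero.mp hη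
  constructor
  · rw [← hx, inv_smul_smul₀ hηη]
  · rw [neg_smul, ← smul_neg, ← hξ, inv_smul_smul₀ hηη]

/-- if `M = X·σ`, `N = Y·σ` with `X = x̃ + iξ`, `Y = y + iη`,
`M² = N² = 1`, `η ≠ 0` and `M(N - N†) = 2I + N + N†`, then
`x̃ = (y × η)/|η|²` and `ξ = -η/|η|²`. -/
theorem stmt11 (xt ξ y η : Fin 3 → ℝ)
    (M N : Matrix (Fin 2) (Fin 2) ℂ)
    (hM : M = dotPauli (fun i => (xt i : ℂ) + Complex.I * (ξ i : ℂ)))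
    (hN : N = dotPauli (fun i => (y i : ℂ) + Complex.I * (η i : ℂ)))
    (hM2 : M ^ 2 = 1) (hN2 : N ^ 2 = 1) (hη : η ≠ 0)
    (key : M * (N - Nᴴ) = (2 : ℂ) • (1 : Matrix (Fin 2) (Fin 2) ℂ) + N + Nᴴ) :
    xt = (η ⬝ᵥ η)⁻¹ • (crossProduct y η) ∧ ξ = -(η ⬝ᵥ η)⁻¹ • η :=
  stmt11_general xt ξ y η M N hM hN hη key
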